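/- arXiv:1303.5019 — 2 statements merged into one kernel-verified Lean document; each statement's English description precedes it below -/
import Mathlib

section
/- Let n be a positive integer and α₁, α₂, β₁ integers, and write d₂ = gcd(α₂, n), d₁ = gcd(α₁, n). The number of triples (x, y, z) ∈ (ℤ/nℤ)³ satisfying α₂·(y − z) ≡ 0 (mod n) and α₁·(x − z) + β₁·(y − z) ≡ 0 (mod n) equals n · d₂ · gcd(β₁ · (n/d₂), d₁). -/
/-!
Substituting `u = x - z`, `v = y - z` splits off a free factor `n`, the choice of `z`. For fixed
`v`, the equation `α₁ u = -β₁ v` has `d₁` solutions when it is solvable, and it is solvable iff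
`(n / d₁) β₁ v = 0`. Together with `α₂ v = 0` this is the single condition
`gcd(α₂, β₁ n / d₁) v = 0`, which has `gcd(α₂, β₁ n / d₁, n)` solutions. Finally
`d₁ gcd(d₂, β₁ n / d₁) = gcd(d₁ d₂, β₁ n) = d₂ gcd(β₁ n / d₂, d₁)`.
-/

open Finset

theorem card_filter_sub_snd_snd {G : Type*} [AddGroup G] [Fintype G] (Q : G × G → Prop)
    [DecidablePred Q] :
    #{p : G × G × G | Q (p.1 - p.2.2, p.2.1 - p.2.2)} = #{q | Q q} * Fintype.card G := by
  let e : G × G × G ≃ (G × G) × G :=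
    { toFun := fun p => ((p.1 - p.2.2, p.2.1 - p.2.2), p.2.2)
      invFun := fun q => (q.1.1 + q.2, q.1.2 + q.2, q.2)
      left_inv := fun p => by simp
      right_inv := fun q => by simp }
  rw [← card_univ, ← card_product]
  exact card_equiv e fun p => by simp [e]

theorem AddMonoidHom.card_filter_and_apply_eq {G V H : Type*} [AddGroup G] [Fintype G]
    [AddMonoid H] [DecidableEq H] [Fintype V] (f : G →+ H) (g : V → H) (P : V → Prop)
    [DecidablePred P] :
    #{q : G × V | P q.2 ∧ f q.1 = g q.2} = #{v | P v ∧ ∃ u, f u = g v} * #{u | f u = 0} := by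
  calc #{q : G × V | P q.2 ∧ f q.1 = g q.2}
      = ∑ v, #{u | P v ∧ f u = g v} := by
        simp only [card_filter, Fintype.sum_prod_type_right]
    _ = ∑ v, if P v ∧ ∃ u, f u = g v then #{u | f u = 0} else 0 := by
        refine sum_congr rfl fun v _ => ?_
        split_ifs with h
        · simp only [h.1, true_and]
          exact card_fiber_eq_of_mem_range f h.2 ⟨0, map_zero f⟩
        · rw [card_eq_zero, filter_eq_empty_iff]
          exact fun u _ hu => h ⟨hu.1, u, hu.2⟩
    _ = #{v | P v ∧ ∃ u, f u = g v} * #{u | f u = 0} := by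
        rw [sum_ite, sum_const_zero, add_zero, sum_const, smul_eq_mul]

theorem Int.cast_gcd_mul_eq_zero_iff {R : Type*} [CommRing R] (a b : ℤ) (v : R) :
    (Int.gcd a b : R) * v = 0 ↔ (a : R) * v = 0 ∧ (b : R) * v = 0 := by
  constructor
  · intro h
    have of_dvd : ∀ c : ℤ, (Int.gcd a b : ℤ) ∣ c → (c : R) * v = 0 := by
      rintro c ⟨k, rfl⟩
      push_cast
      linear_combination (k : R) * h
    exact ⟨of_dvd a (Int.gcd_dvd_left a b), of_dvd b (Int.gcd_dvd_right a b)⟩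
  · rintro ⟨ha, hb⟩
    rw [← Int.cast_natCast, Int.gcd_eq_gcd_ab]
    push_cast
    linear_combination (Int.gcdA a b : R) * ha + (Int.gcdB a b : R) * hb

theorem Int.gcd_gcd_mul_div_mul_eq (a β : ℤ) {n d : ℕ} (hd : d ∣ n) :
    Int.gcd (Int.gcd a (β * (n / d : ℕ))) n * d =
      Int.gcd a n * Int.gcd (β * (n / Int.gcd a n : ℕ)) d := by
  have hd' : Int.gcd a n ∣ n := by exact_mod_cast Int.gcd_dvd_right a n
  have h1 : ((n / d : ℕ) : ℤ) * d = n := by exact_mod_cast Nat.div_mul_cancel hd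
  have h2 : (Int.gcd a n : ℤ) * (n / Int.gcd a n : ℕ) = n := by
    exact_mod_cast Nat.mul_div_cancel' hd'
  calc Int.gcd (Int.gcd a (β * (n / d : ℕ))) n * d
      = Int.gcd (Int.gcd a n * d) (β * (n / d : ℕ) * d) := by
        rw [Int.gcd_right_comm, Int.gcd_mul_right, Int.natAbs_natCast]
    _ = Int.gcd (Int.gcd a n * (β * (n / Int.gcd a n : ℕ))) (Int.gcd a n * d) := by
        rw [Int.gcd_comm, mul_assoc, h1, mul_left_comm, h2]
    _ = Int.gcd a n * Int.gcd (β * (n / Int.gcd a n : ℕ)) d := by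
        rw [Int.gcd_mul_left, Int.natAbs_natCast]

namespace ZMod

theorem intCast_mul_eq_zero_iff_natAbs_nsmul {n : ℕ} (a : ℤ) (u : ZMod n) :
    (a : ZMod n) * u = 0 ↔ a.natAbs • u = 0 := by
  rw [nsmul_eq_mul]
  rcases Int.natAbs_eq a with h | h <;> nth_rw 1 [h] <;> simp

variable (n : ℕ) [NeZero n]

theorem card_filter_intCast_mul_eq_zero (a : ℤ) :
    #{u : ZMod n | (a : ZMod n) * u = 0} = Int.gcd a n := by
  have key := IsAddCyclic.card_nsmulAddMonoidHom_ker (ZMod n) a.natAbs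
  rw [Nat.card_zmod, Nat.card_congr (Equiv.subtypeEquivRight fun _ => AddMonoidHom.mem_ker),
    Nat.card_eq_fintype_card, Fintype.card_subtype] at key
  simp only [nsmulAddMonoidHom_apply] at key
  simp_rw [intCast_mul_eq_zero_iff_natAbs_nsmul]
  rw [key, Int.gcd_eq_natAbs, Int.natAbs_natCast, Nat.gcd_comm]

theorem exists_intCast_mul_eq_iff (a : ℤ) (c : ZMod n) :
    (∃ u : ZMod n, (a : ZMod n) * u = c) ↔ ((n / Int.gcd a n : ℕ) : ZMod n) * c = 0 := by
  set d := Int.gcd a n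
  have hdn : d ∣ n := by exact_mod_cast Int.gcd_dvd_right a n
  have hcofactor : ((n / d : ℕ) : ZMod n) * d = 0 := by
    rw [← Nat.cast_mul, Nat.div_mul_cancel hdn, natCast_self]
  constructor
  · rintro ⟨u, rfl⟩
    obtain ⟨k, hk⟩ := Int.gcd_dvd_left a n
    rw [hk]
    push_cast
    linear_combination ((k : ZMod n) * u) * hcofactor
  · intro h
    rw [← natCast_zmod_val c, ← Nat.cast_mul, natCast_eq_zero_iff] at h
    have hd_val : d ∣ c.val := by
      have hpos : 0 < n / d :=
        Nat.div_pos (Nat.le_of_dvd (NeZero.pos n) hdn) (Nat.pos_of_dvd_of_pos hdn (NeZero.pos n))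
      exact (Nat.mul_dvd_mul_iff_left hpos).mp (by rwa [Nat.div_mul_cancel hdn])
    obtain ⟨k, hk⟩ := hd_val
    refine ⟨(Int.gcdA a n : ZMod n) * k, ?_⟩
    have hbezout : (d : ZMod n) = a * Int.gcdA a n := by
      have := congrArg (Int.cast : ℤ → ZMod n) (Int.gcd_eq_gcd_ab a n)
      push_cast at this
      simpa using this
    rw [← natCast_zmod_val c, hk, Nat.cast_mul, hbezout]
    ring

end ZMod

/-- Type II count: the number of triples `(x,y,z) ∈ (ℤ/nℤ)³` with
`α₂(y−z) = 0` and `α₁(x−z) + β₁(y−z) = 0` is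
`n · d₂ · gcd(β₁·(n/d₂), d₁)` where `d₂ = gcd(α₂,n)`, `d₁ = gcd(α₁,n)`. -/
theorem stmt_2 (n : ℕ) [NeZero n] (α₁ α₂ β₁ : ℤ) :
    (Finset.univ.filter
        (fun p : ZMod n × ZMod n × ZMod n =>
          (α₂ : ZMod n) * (p.2.1 - p.2.2) = 0 ∧
          (α₁ : ZMod n) * (p.1 - p.2.2) + (β₁ : ZMod n) * (p.2.1 - p.2.2) = 0)).card
      = n * Int.gcd α₂ n *
          Int.gcd (β₁ * ((n / Int.gcd α₂ n : ℕ) : ℤ)) (Int.gcd α₁ n) := by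
  have hd₁ : Int.gcd α₁ n ∣ n := by exact_mod_cast Int.gcd_dvd_right α₁ n
  calc _ = #{q : ZMod n × ZMod n | (α₂ : ZMod n) * q.2 = 0 ∧
          (α₁ : ZMod n) * q.1 + β₁ * q.2 = 0} * Fintype.card (ZMod n) :=
        card_filter_sub_snd_snd _
    _ = #{q : ZMod n × ZMod n | (α₂ : ZMod n) * q.2 = 0 ∧
          AddMonoidHom.mulLeft (α₁ : ZMod n) q.1 = -(β₁ * q.2)} * Fintype.card (ZMod n) := by
        simp_rw [AddMonoidHom.coe_mulLeft, ← add_eq_zero_iff_eq_neg]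
    _ = #{v : ZMod n | (α₂ : ZMod n) * v = 0 ∧ ∃ u, (α₁ : ZMod n) * u = -(β₁ * v)} *
          #{u : ZMod n | (α₁ : ZMod n) * u = 0} * Fintype.card (ZMod n) := by
        congr 1
        exact AddMonoidHom.card_filter_and_apply_eq (AddMonoidHom.mulLeft (α₁ : ZMod n))
          (fun v => -(β₁ * v)) (fun v => α₂ * v = 0)
    _ = #{v : ZMod n | ((Int.gcd α₂ (β₁ * (n / Int.gcd α₁ n : ℕ)) : ℤ) : ZMod n) * v = 0} *
          Int.gcd α₁ n * Fintype.card (ZMod n) := by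
        rw [ZMod.card_filter_intCast_mul_eq_zero]
        congr 3 with v
        rw [mem_filter_univ, mem_filter_univ, ZMod.exists_intCast_mul_eq_iff, Int.cast_natCast,
          Int.cast_gcd_mul_eq_zero_iff, Int.cast_mul, Int.cast_natCast, mul_neg, neg_eq_zero,
          mul_left_comm, mul_assoc]
    _ = n * Int.gcd α₂ n * Int.gcd (β₁ * (n / Int.gcd α₂ n : ℕ)) (Int.gcd α₁ n) := by
        rw [ZMod.card, ZMod.card_filter_intCast_mul_eq_zero,
          Int.gcd_gcd_mul_div_mul_eq α₂ β₁ hd₁]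
        ring
end

section
/- Let m, n be coprime positive integers with n ≥ 1, and set α = 1 − m + m². Writing d = gcd(α, n), one has n · d · gcd(−2m² · (n/d), d) = n · gcd(α², n). In particular the type II colouring-count formula with α₁ = α₂ = 1 − m + m² and β₁ = −2m² agrees with the type I formula n · gcd((1 − m + m²)², n). -/
lemma gcd_sq_aux' (d a' n' : ℕ) (hcop : Nat.Coprime a' n') :
    Nat.gcd ((d * a') ^ 2) (d * n') = d * Nat.gcd n' d := by
  have h1 : (d * a') ^ 2 = d * (d * a' ^ 2) := by ring
  rw [h1, Nat.gcd_mul_left, Nat.gcd_comm n' d]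
  congr 1
  have hcop2 : Nat.Coprime (a' ^ 2) n' := hcop.pow_left 2
  calc Nat.gcd (d * a' ^ 2) n' = Nat.gcd (a' ^ 2 * d) n' := by rw [Nat.mul_comm]
    _ = Nat.gcd d n' := Nat.Coprime.gcd_mul_left_cancel d hcop2

/-- Key arithmetic identity: `gcd(a², n) = gcd(a,n) · gcd(n/gcd(a,n), gcd(a,n))`. -/
lemma gcd_sq_aux (a n : ℕ) (ha : 0 < a) :
    Nat.gcd (a ^ 2) n = Nat.gcd a n * Nat.gcd (n / Nat.gcd a n) (Nat.gcd a n) := by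
  have hdpos : 0 < Nat.gcd a n := Nat.gcd_pos_of_pos_left n ha
  have hcop : Nat.Coprime (a / Nat.gcd a n) (n / Nat.gcd a n) :=
    Nat.coprime_div_gcd_div_gcd hdpos
  have ha' : a = Nat.gcd a n * (a / Nat.gcd a n) :=
    (Nat.mul_div_cancel' (Nat.gcd_dvd_left a n) ).symm
  have hn' : n = Nat.gcd a n * (n / Nat.gcd a n) :=
    (Nat.mul_div_cancel' (Nat.gcd_dvd_right a n)).symm
  calc Nat.gcd (a ^ 2) n
      = Nat.gcd ((Nat.gcd a n * (a / Nat.gcd a n)) ^ 2)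
          (Nat.gcd a n * (n / Nat.gcd a n)) := by rw [← ha', ← hn']
    _ = Nat.gcd a n * Nat.gcd (n / Nat.gcd a n) (Nat.gcd a n) :=
        gcd_sq_aux' _ _ _ hcop

/-- For coprime positive `m, n`, with `α = 1 − m + m²` and `d = gcd(α,n)`:
`n · d · gcd(−2m²·(n/d), d) = n · gcd(α², n)`, i.e. the type II colouring
formula for `10₁₄₀` agrees with the type I formula for `8₂₀`. -/
theorem stmt_6 (m n : ℕ) (hm : 0 < m) (hn : 1 ≤ n) (hmn : Nat.Coprime m n) :
    n * Int.gcd ((1 : ℤ) - m + m ^ 2) n *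
        Int.gcd ((-2 * (m : ℤ) ^ 2) *
          ((n / Int.gcd ((1 : ℤ) - m + m ^ 2) n : ℕ) : ℤ))
          (Int.gcd ((1 : ℤ) - m + m ^ 2) n)
      = n * Int.gcd (((1 : ℤ) - m + m ^ 2) ^ 2) n := by
  set a : ℕ := m ^ 2 - m + 1 with hadef
  have hma : m ≤ m ^ 2 := by nlinarith
  have hcast : ((1 : ℤ) - m + m ^ 2) = (a : ℤ) := by
    have : (a : ℤ) = (m : ℤ) ^ 2 - m + 1 := by
      push_cast [hadef, Nat.cast_sub hma]; ring
    rw [this]; ring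
  have hapos : 0 < a := Nat.succ_le_iff.mp (Nat.le_add_left 1 _)
  rw [hcast]
  have hg1 : Int.gcd ((a : ℤ)) (n : ℤ) = Nat.gcd a n := Int.gcd_natCast_natCast a n
  have hg2 : Int.gcd (((a : ℤ)) ^ 2) (n : ℤ) = Nat.gcd (a ^ 2) n := by
    rw [show ((a : ℤ)) ^ 2 = ((a ^ 2 : ℕ) : ℤ) by push_cast; ring]
    exact Int.gcd_natCast_natCast _ _
  rw [hg1, hg2]
  set d := Nat.gcd a n with hd
  -- middle gcd
  have hmid : Int.gcd ((-2 * (m : ℤ) ^ 2) * ((n / d : ℕ) : ℤ)) (d : ℤ)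
      = Nat.gcd (2 * m ^ 2 * (n / d)) d := by
    have : (-2 * (m : ℤ) ^ 2) * ((n / d : ℕ) : ℤ) = -(((2 * m ^ 2 * (n / d) : ℕ)) : ℤ) := by
      push_cast; ring
    rw [this, Int.neg_gcd, Int.gcd_natCast_natCast]
  rw [hmid]
  -- coprimality of 2m² and d
  have hdvd_a : d ∣ a := Nat.gcd_dvd_left a n
  have hdvd_n : d ∣ n := Nat.gcd_dvd_right a n
  have haodd : Odd a := by
    have heven : Even (m ^ 2 - m) := by
      have h2 : m ^ 2 - m = (m - 1) * ((m - 1) + 1) := by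
        cases m with
        | zero => omega
        | succ k => simp [pow_two]; ring_nf; omega
      rw [h2]; exact Nat.even_mul_succ_self _
    exact heven.add_one
  have hcop2 : Nat.Coprime 2 d :=
    (Nat.coprime_two_left.mpr haodd).coprime_dvd_right hdvd_a
  have hcopm : Nat.Coprime (m ^ 2) d := (hmn.pow_left 2).coprime_dvd_right hdvd_n
  have hcop : Nat.Coprime (2 * m ^ 2) d := hcop2.mul hcopm
  rw [Nat.Coprime.gcd_mul_left_cancel _ hcop]
  rw [gcd_sq_aux a n hapos]
  ring
end
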